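/- arXiv:2604.01026 — 4 statements merged into one kernel-verified Lean document; each statement's English description precedes it below -/
import Mathlib

section
/- For skew-adjoint matrices C_1, ..., C_r and every q ≥ 1 and h ≥ 0, ‖e^{hC_r}···e^{hC_1} − e^{h(C_1+···+C_r)}‖ ≤ Σ_{n=1}^{q} h^n ‖Σ_{j_1+···+j_r=n} C_r^{j_r}···C_1^{j_1}/(j_r!···j_1!) − (C_1+···+C_r)^n/n!‖ + h^{q+1}/(q+1)! · ((‖C_1‖+···+‖C_r‖)^{q+1} + ‖C_1+···+C_r‖^{q+1}). -/
/-!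
Write `F(t) = e^{tC_r}⋯e^{tC_1}` and `G(t) = e^{t(C_1+⋯+C_r)}`, and split `F(h) - G(h)` through
the degree-`q` Taylor polynomials of `F` and `G` at `0`. The Taylor coefficients of `F` are the
multinomial sums `∑_{|j| = m} C_r^{j_r}⋯C_1^{j_1}/(j_r!⋯j_1!)` (Leibniz rule, by induction on `r`),
those of `G` are `(C_1+⋯+C_r)^m/m!`, and the constant terms agree. The Taylor remainders are
bounded by `h^{q+1}/(q+1)!` times a bound for the `(q+1)`-st derivative on `[0, h]`. Since the
`C_i` are skew-adjoint, every `e^{sC_i}` is unitary, so `‖(d/dt)^k e^{tC_i}‖ = ‖C_i^k‖ ≤ ‖C_i‖^k`,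
and the Leibniz rule together with the binomial theorem gives `‖F^{(k)}‖ ≤ (∑ ‖C_i‖)^k`; likewise
`‖G^{(k)}‖ ≤ ‖∑ C_i‖^k`.
-/

open scoped Matrix Matrix.Norms.L2Operator
open NormedSpace

open scoped Nat ContDiff
open Finset

section Taylor

variable {E : Type*} [NormedAddCommGroup E] [NormedSpace ℝ E]

theorem hasDerivAt_sum_pow_div_factorial_smul (c : ℕ → E) (q : ℕ) (s : ℝ) :
    HasDerivAt (fun t : ℝ => ∑ m ∈ range (q + 1), (t ^ m / m !) • c m)
      (∑ m ∈ range q, (s ^ m / m !) • c (m + 1)) s := by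
  induction q with
  | zero => simpa using hasDerivAt_const s (c 0)
  | succ q ih =>
    have hlast : HasDerivAt (fun t : ℝ => (t ^ (q + 1) / (q + 1)!) • c (q + 1))
        ((s ^ q / q !) • c (q + 1)) s := by
      refine (((hasDerivAt_pow (q + 1) s).div_const _).smul_const _).congr_deriv ?_
      rw [Nat.factorial_succ]
      push_cast
      field_simp
    convert ih.add hlast using 1
    · ext t
      exact sum_range_succ _ (q + 1)
    · exact sum_range_succ _ q

theorem norm_le_pow_succ_div_factorial_of_hasDerivAt {R R' : ℝ → E} {M t : ℝ} {p : ℕ}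
    (hR : ∀ s, HasDerivAt R (R' s) s) (hR0 : R 0 = 0) (ht : 0 ≤ t)
    (hR' : ∀ s ∈ Set.Icc 0 t, ‖R' s‖ ≤ M * s ^ p / p !) :
    ‖R t‖ ≤ M * t ^ (p + 1) / (p + 1)! := by
  have hB (s : ℝ) : HasDerivAt (fun s => M * s ^ (p + 1) / (p + 1)!) (M * s ^ p / p !) s := by
    refine (((hasDerivAt_pow (p + 1) s).const_mul M).div_const _).congr_deriv ?_
    rw [Nat.factorial_succ]
    push_cast
    field_simp
  exact image_norm_le_of_norm_deriv_right_le_deriv_boundary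
    (fun s _ => (hR s).continuousAt.continuousWithinAt) (fun s _ => (hR s).hasDerivWithinAt)
    (by simp [hR0]) hB (fun s hs => hR' s (Set.Ico_subset_Icc_self hs)) ⟨ht, le_rfl⟩

/-- Unlike `taylor_mean_remainder_bound`, the remainder bound has the sharp denominator `(q+1)!`. -/
theorem norm_sub_taylor_le {f : ℝ → E} {q : ℕ} {M t : ℝ} (hf : ContDiff ℝ (q + 1) f)
    (ht : 0 ≤ t) (hM : ∀ s ∈ Set.Icc 0 t, ‖iteratedDeriv (q + 1) f s‖ ≤ M) :
    ‖f t - ∑ m ∈ range (q + 1), (t ^ m / m !) • iteratedDeriv m f 0‖ ≤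
      M * t ^ (q + 1) / (q + 1)! := by
  have hdf (s : ℝ) : HasDerivAt f (deriv f s) s := (hf.differentiable (by simp) s).hasDerivAt
  induction q generalizing f t with
  | zero =>
    simp only [zero_add, range_one, sum_singleton, pow_zero, Nat.factorial_zero, Nat.cast_one,
      div_one, one_smul, iteratedDeriv_zero]
    refine norm_le_pow_succ_div_factorial_of_hasDerivAt (p := 0)
      (fun s => (hdf s).sub_const (f 0)) (by simp) ht ?_
    simpa using hM
  | succ q ih =>
    have hf' : ContDiff ℝ (q + 1) (deriv f) := (contDiff_succ_iff_deriv.mp hf).2.2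
    refine norm_le_pow_succ_div_factorial_of_hasDerivAt
      (fun s => (hdf s).sub (hasDerivAt_sum_pow_div_factorial_smul _ (q + 1) s))
      (by simp [sum_range_succ']) ht fun s hs => ?_
    simp only [iteratedDeriv_succ']
    exact ih hf' hs.1 (fun u hu => iteratedDeriv_succ' (f := f) ▸ hM u ⟨hu.1, hu.2.trans hs.2⟩)
      fun u => (hf'.differentiable (by simp) u).hasDerivAt

theorem norm_sub_le_of_taylor {f g : ℝ → E} {q : ℕ} {Mf Mg t : ℝ} (hf : ContDiff ℝ (q + 1) f)
    (hg : ContDiff ℝ (q + 1) g) (ht : 0 ≤ t)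
    (hMf : ∀ s ∈ Set.Icc 0 t, ‖iteratedDeriv (q + 1) f s‖ ≤ Mf)
    (hMg : ∀ s ∈ Set.Icc 0 t, ‖iteratedDeriv (q + 1) g s‖ ≤ Mg) :
    ‖f t - g t‖ ≤ ∑ m ∈ range (q + 1), t ^ m / m ! * ‖iteratedDeriv m f 0 - iteratedDeriv m g 0‖
      + (Mf + Mg) * t ^ (q + 1) / (q + 1)! := by
  set Tf := ∑ m ∈ range (q + 1), (t ^ m / m !) • iteratedDeriv m f 0
  set Tg := ∑ m ∈ range (q + 1), (t ^ m / m !) • iteratedDeriv m g 0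
  have hT : ‖Tf - Tg‖ ≤
      ∑ m ∈ range (q + 1), t ^ m / m ! * ‖iteratedDeriv m f 0 - iteratedDeriv m g 0‖ := by
    rw [← sum_sub_distrib]
    refine (norm_sum_le _ _).trans_eq (sum_congr rfl fun m _ => ?_)
    rw [← smul_sub, norm_smul, Real.norm_of_nonneg (by positivity)]
  calc ‖f t - g t‖ = ‖(f t - Tf) + (Tf - Tg) - (g t - Tg)‖ := by congr 1; abel
    _ ≤ ‖f t - Tf‖ + ‖Tf - Tg‖ + ‖g t - Tg‖ :=
      (norm_sub_le _ _).trans (add_le_add_left (norm_add_le _ _) _)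
    _ ≤ Mf * t ^ (q + 1) / (q + 1)! + ‖Tf - Tg‖ + Mg * t ^ (q + 1) / (q + 1)! := by
      gcongr
      exacts [norm_sub_taylor_le hf ht hMf, norm_sub_taylor_le hg ht hMg]
    _ ≤ _ := by
      rw [add_mul, add_div]
      linarith

end Taylor

theorem List.prod_reverse_ofFn_succ {M : Type*} [Monoid M] {r : ℕ} (f : Fin (r + 1) → M) :
    (List.ofFn f).reverse.prod = (List.ofFn fun i => f i.succ).reverse.prod * f 0 := by
  simp [List.ofFn_succ]

theorem Finset.Nat.sum_antidiagonalTuple_succ {M : Type*} [AddCommMonoid M] (k n : ℕ)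
    (f : (Fin (k + 1) → ℕ) → M) :
    ∑ x ∈ antidiagonalTuple (k + 1) n, f x =
      ∑ p ∈ antidiagonal n, ∑ x ∈ antidiagonalTuple k p.2, f (Fin.cons p.1 x) := by
  rw [sum_sigma']
  refine sum_nbij' (fun x => ⟨(x 0, n - x 0), Fin.tail x⟩) (fun y => Fin.cons y.1.1 y.2)
    ?_ ?_ ?_ ?_ fun _ _ => by simp
  · intro x hx
    simp only [mem_antidiagonalTuple, Fin.sum_univ_succ] at hx
    simp only [mem_sigma, HasAntidiagonal.mem_antidiagonal, mem_antidiagonalTuple, Fin.tail]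
    omega
  · rintro ⟨⟨a, b⟩, y⟩ h
    simp only [mem_sigma, HasAntidiagonal.mem_antidiagonal, mem_antidiagonalTuple] at h
    simp only [mem_antidiagonalTuple, Fin.sum_cons]
    omega
  · intro x _
    simp
  · rintro ⟨⟨a, b⟩, y⟩ h
    simp only [mem_sigma, HasAntidiagonal.mem_antidiagonal, mem_antidiagonalTuple] at h
    simp only [Fin.cons_zero, Fin.tail_cons, Sigma.mk.injEq, Prod.mk.injEq, heq_eq_eq, true_and,
      and_true]
    omega

section Products

variable {𝔸 : Type*} [NormedRing 𝔸] [NormedAlgebra ℝ 𝔸]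

theorem contDiff_prod_ofFn_reverse {r : ℕ} {f : Fin r → ℝ → 𝔸} {N : WithTop ℕ∞}
    (hf : ∀ i, ContDiff ℝ N (f i)) :
    ContDiff ℝ N fun t => (List.ofFn fun i => f i t).reverse.prod := by
  induction r with
  | zero => simpa using contDiff_const
  | succ r ih =>
    simp_rw [List.prod_reverse_ofFn_succ]
    exact (ih fun i => hf i.succ).mul (hf 0)

theorem norm_iteratedDeriv_prod_ofFn_reverse_le {r : ℕ} {f : Fin r → ℝ → 𝔸} {b : Fin r → ℝ}
    (h1 : ‖(1 : 𝔸)‖ ≤ 1) (hf : ∀ i, ContDiff ℝ ∞ (f i))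
    (hb : ∀ i k s, ‖iteratedDeriv k (f i) s‖ ≤ b i ^ k) (k : ℕ) (s : ℝ) :
    ‖iteratedDeriv k (fun t => (List.ofFn fun i => f i t).reverse.prod) s‖ ≤ (∑ i, b i) ^ k := by
  induction r generalizing k with
  | zero => cases k <;> simp [iteratedDeriv_const, h1]
  | succ r ih =>
    have hb0 (i : Fin (r + 1)) : 0 ≤ b i := (norm_nonneg _).trans (by simpa using hb i 1 s)
    simp_rw [List.prod_reverse_ofFn_succ, ← norm_iteratedFDeriv_eq_norm_iteratedDeriv]
    calc _ ≤ ∑ i ∈ range (k + 1), (k.choose i : ℝ) *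
            ‖iteratedFDeriv ℝ i (fun t => (List.ofFn fun j : Fin r => f j.succ t).reverse.prod) s‖ *
            ‖iteratedFDeriv ℝ (k - i) (f 0) s‖ :=
          norm_iteratedFDeriv_mul_le (contDiff_prod_ofFn_reverse fun i => hf i.succ) (hf 0) s
            (by exact_mod_cast le_top)
      _ ≤ ∑ i ∈ range (k + 1), (k.choose i : ℝ) * (∑ j : Fin r, b j.succ) ^ i * b 0 ^ (k - i) := by
          simp only [norm_iteratedFDeriv_eq_norm_iteratedDeriv]
          gcongr with i
          · exact mul_nonneg (Nat.cast_nonneg _) (pow_nonneg (sum_nonneg fun j _ => hb0 j.succ) i)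
          · exact ih (fun i => hf i.succ) (fun i => hb i.succ) i
          · exact hb 0 _ s
      _ = (∑ i, b i) ^ k := by
          rw [Fin.sum_univ_succ, add_comm (b 0), add_pow]
          exact sum_congr rfl fun i _ => by ring

variable [CompleteSpace 𝔸]

theorem iteratedDeriv_exp_smul (X : 𝔸) (k : ℕ) :
    iteratedDeriv k (fun t : ℝ => exp (t • X)) = fun t => exp (t • X) * X ^ k := by
  induction k with
  | zero => simp
  | succ k ih =>
    ext t
    rw [iteratedDeriv_succ, ih, pow_succ', ← mul_assoc]
    exact ((hasDerivAt_exp_smul_const X t).mul_const _).deriv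

theorem contDiff_exp_smul (X : 𝔸) : ContDiff ℝ ∞ fun t : ℝ => exp (t • X) :=
  contDiff_of_differentiable_iteratedDeriv fun m _ => by
    rw [iteratedDeriv_exp_smul]
    exact (differentiable_exp_smul_const ℝ X).mul_const _

theorem iteratedDeriv_prod_exp_smul_zero {r : ℕ} (A : Fin r → 𝔸) (m : ℕ) :
    iteratedDeriv m (fun t : ℝ => (List.ofFn fun i => exp (t • A i)).reverse.prod) 0 =
      (m ! : ℝ) • ∑ j ∈ Nat.antidiagonalTuple r m,
        ((∏ i, (j i)! : ℕ) : ℝ)⁻¹ • (List.ofFn fun i => A i ^ j i).reverse.prod := by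
  induction r generalizing m with
  | zero => cases m <;> simp [iteratedDeriv_const]
  | succ r ih =>
    have hP := contDiff_prod_ofFn_reverse fun i : Fin r => contDiff_exp_smul (A i.succ)
    simp_rw [List.prod_reverse_ofFn_succ]
    -- Leibniz: `i` derivatives fall on the factors `1, …, r` and `m - i` on `exp (t • A 0)`,
    -- which matches the summand `j = Fin.cons (m - i) j'` with `j' ∈ antidiagonalTuple r i`.
    rw [iteratedDeriv_fun_mul (contDiff_infty.mp hP m).contDiffAt
      (contDiff_infty.mp (contDiff_exp_smul (A 0)) m).contDiffAt, Nat.sum_antidiagonalTuple_succ,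
      ← Nat.sum_antidiagonal_swap, Nat.sum_antidiagonal_eq_sum_range_succ_mk, smul_sum]
    refine sum_congr rfl fun i hi => ?_
    have hfact : (m.choose i * i ! * (m - i)! : ℝ) = m ! := by
      exact_mod_cast Nat.choose_mul_factorial_mul_factorial (Nat.lt_succ_iff.mp (mem_range.mp hi))
    simp only [Prod.swap, Fin.cons_zero, Fin.cons_succ, Fin.prod_univ_succ, ih,
      iteratedDeriv_exp_smul, zero_smul, exp_zero, one_mul]
    rw [← nsmul_eq_mul, smul_mul_assoc, smul_mul_assoc, sum_mul, smul_sum, smul_sum, smul_sum]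
    refine sum_congr rfl fun j _ => ?_
    rw [smul_mul_assoc, ← Nat.cast_smul_eq_nsmul ℝ, smul_smul, smul_smul, smul_smul]
    congr 1
    rw [← hfact]
    push_cast
    field_simp

theorem iteratedDeriv_prod_exp_smul_sub_exp_smul_sum_zero {r : ℕ} (A : Fin r → 𝔸) (m : ℕ) :
    iteratedDeriv m (fun t : ℝ => (List.ofFn fun i => exp (t • A i)).reverse.prod) 0
        - iteratedDeriv m (fun t : ℝ => exp (t • ∑ i, A i)) 0 =
      (m ! : ℝ) • ((∑ j ∈ Nat.antidiagonalTuple r m,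
        ((∏ i, (j i)! : ℕ) : ℝ)⁻¹ • (List.ofFn fun i => A i ^ j i).reverse.prod)
          - (m ! : ℝ)⁻¹ • (∑ i, A i) ^ m) := by
  rw [iteratedDeriv_prod_exp_smul_zero, iteratedDeriv_exp_smul, smul_sub,
    smul_inv_smul₀ (by positivity)]
  simp

end Products

section CStarAlgebra

variable {𝔸 : Type*} [NormedRing 𝔸] [StarRing 𝔸] [CStarRing 𝔸]

theorem CStarRing.norm_one_le : ‖(1 : 𝔸)‖ ≤ 1 := by
  have h := CStarRing.norm_star_mul_self (x := (1 : 𝔸))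
  rw [star_one, one_mul] at h
  nlinarith [norm_nonneg (1 : 𝔸)]

theorem CStarRing.norm_pow_le (x : 𝔸) (k : ℕ) : ‖x ^ k‖ ≤ ‖x‖ ^ k := by
  rcases k.eq_zero_or_pos with rfl | hk
  · simpa using norm_one_le
  · exact norm_pow_le' x hk

variable [NormedAlgebra ℝ 𝔸] [StarModule ℝ 𝔸] [CompleteSpace 𝔸]

theorem norm_iteratedDeriv_exp_smul_le {X : 𝔸} (hX : star X = -X) (k : ℕ) (s : ℝ) :
    ‖iteratedDeriv k (fun t : ℝ => exp (t • X)) s‖ ≤ ‖X‖ ^ k := by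
  let : NormedAlgebra ℚ 𝔸 := .restrictScalars ℚ ℝ 𝔸
  have hU : exp (s • X) ∈ unitary 𝔸 := by
    refine exp_mem_unitary_of_mem_skewAdjoint ?_
    rw [skewAdjoint.mem_iff, star_smul, hX, smul_neg, star_trivial]
  rw [iteratedDeriv_exp_smul, CStarRing.norm_coe_unitary_mul ⟨_, hU⟩]
  exact CStarRing.norm_pow_le X k

end CStarAlgebra

theorem product_of_exponentials_local_error_bound_general {n r : ℕ}
    (C : Fin r → Matrix (Fin n) (Fin n) ℂ)
    (hskew : ∀ j, (C j)ᴴ = -(C j)) (q : ℕ) (h : ℝ) (hh : 0 ≤ h) :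
    ‖(List.ofFn fun j => exp (h • C j)).reverse.prod - exp (h • ∑ j, C j)‖ ≤
      (∑ m ∈ Finset.Icc 1 q, h ^ m *
          ‖(∑ j ∈ Finset.Nat.antidiagonalTuple r m,
              ((∏ i, (j i).factorial : ℕ) : ℝ)⁻¹ •
                (List.ofFn fun i => C i ^ j i).reverse.prod)
            - ((m.factorial : ℝ))⁻¹ • (∑ j, C j) ^ m‖)
        + h ^ (q + 1) / (q + 1).factorial *
            ((∑ j, ‖C j‖) ^ (q + 1) + ‖∑ j, C j‖ ^ (q + 1)) := by
  have hS : star (∑ j, C j) = -∑ j, C j := by simp [Matrix.star_eq_conjTranspose, hskew]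
  refine (norm_sub_le_of_taylor (q := q)
    ((contDiff_prod_ofFn_reverse fun j => contDiff_exp_smul (C j)).of_le (by exact_mod_cast le_top))
    ((contDiff_exp_smul _).of_le (by exact_mod_cast le_top)) hh
    (fun s _ => norm_iteratedDeriv_prod_ofFn_reverse_le CStarRing.norm_one_le
      (fun j => contDiff_exp_smul (C j)) (fun j => norm_iteratedDeriv_exp_smul_le (hskew j)) _ s)
    (fun s _ => norm_iteratedDeriv_exp_smul_le hS _ s)).trans_eq ?_
  simp only [iteratedDeriv_prod_exp_smul_sub_exp_smul_sum_zero, norm_smul, Real.norm_natCast]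
  rw [Nat.range_succ_eq_Icc_zero, Icc_eq_cons_Ioc q.zero_le, sum_cons,
    ← Finset.Icc_add_one_left_eq_Ioc, zero_add]
  simp only [Nat.antidiagonalTuple_zero_right, sum_singleton, Pi.zero_apply, prod_const_one,
    Nat.factorial_zero, Nat.cast_one, inv_one, pow_zero, one_pow, one_smul, List.ofFn_const,
    List.reverse_replicate, List.prod_replicate, sub_self, norm_zero, mul_zero, zero_add]
  congr 1
  · exact sum_congr rfl fun m _ => by field_simp
  · ring

/-- Local-error bound for a product of exponentials of skew-adjoint
matrices in terms of truncated Taylor expansions. -/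
theorem product_of_exponentials_local_error_bound {n r : ℕ}
    (C : Fin r → Matrix (Fin n) (Fin n) ℂ)
    (hskew : ∀ j, (C j)ᴴ = -(C j)) (q : ℕ) (hq : 1 ≤ q) (h : ℝ) (hh : 0 ≤ h) :
    ‖(List.ofFn fun j => exp (h • C j)).reverse.prod - exp (h • ∑ j, C j)‖ ≤
      (∑ m ∈ Finset.Icc 1 q, h ^ m *
          ‖(∑ j ∈ Finset.Nat.antidiagonalTuple r m,
              ((∏ i, (j i).factorial : ℕ) : ℝ)⁻¹ •
                (List.ofFn fun i => C i ^ j i).reverse.prod)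
            - ((m.factorial : ℝ))⁻¹ • (∑ j, C j) ^ m‖)
        + h ^ (q + 1) / (q + 1).factorial *
            ((∑ j, ‖C j‖) ^ (q + 1) + ‖∑ j, C j‖ ^ (q + 1)) :=
  product_of_exponentials_local_error_bound_general C hskew q h hh
end

section
/- For skew-adjoint matrices C_1, ..., C_r, define M(t) = (d/dt)(e^{tC_r}···e^{tC_1}) · (e^{tC_r}···e^{tC_1})^{-1}. Then for all h ≥ 0, ‖e^{hC_r}···e^{hC_1} − e^{h(C_1+···+C_r)}‖ ≤ ∫_0^h ‖M(t) − (C_1+···+C_r)‖ dt. -/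
/-!
Write `Ψ(t) = e^{tC_r} ⋯ e^{tC_1}` and `S = C_1 + ⋯ + C_r`. Differentiating
`t ↦ e^{(h-t)S} Ψ(t)` gives the variation-of-constants formula
`Ψ(h) - e^{hS} = ∫_0^h e^{(h-t)S} (Ψ'(t) - S Ψ(t)) dt`, and the integrand equals
`e^{(h-t)S} (M(t) - S) Ψ(t)`. Since `S` is skew-adjoint, `e^{(h-t)S}` and `Ψ(t)` are unitary,
so in a C⋆-norm the integrand has norm exactly `‖M(t) - S‖`.
-/

open scoped Matrix Matrix.Norms.L2Operator
open NormedSpace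

section ListProd

variable {𝕜 E A ι : Type*} [NontriviallyNormedField 𝕜] [NormedAddCommGroup E] [NormedSpace 𝕜 E]
  [NormedRing A] [NormedAlgebra 𝕜 A] {n : WithTop ℕ∞}

theorem contDiff_list_prod (l : List ι) {f : ι → E → A}
    (hf : ∀ i ∈ l, ContDiff 𝕜 n (f i)) : ContDiff 𝕜 n fun x => (l.map fun i => f i x).prod := by
  induction l with
  | nil => exact contDiff_const
  | cons i l ih =>
    simp only [List.map_cons, List.prod_cons]
    exact (hf i List.mem_cons_self).mul (ih fun j hj => hf j (List.mem_cons_of_mem i hj))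

end ListProd

section Exp

variable {A : Type*} [NormedRing A] [CompleteSpace A]

theorem contDiff_exp_smul_const {𝕂 : Type*} [RCLike 𝕂] [NormedAlgebra 𝕂 A] (S : A)
    {n : WithTop ℕ∞} : ContDiff 𝕂 n fun t : 𝕂 => exp (t • S) :=
  contDiff_iff_contDiffAt.mpr fun t => (exp_analytic (t • S)).contDiffAt.comp t
    (contDiff_id.smul contDiff_const).contDiffAt

variable [NormedAlgebra ℝ A]

theorem sub_exp_smul_mul_eq_integral {Ψ Ψ' : ℝ → A} (hΨ : ∀ t, HasDerivAt Ψ (Ψ' t) t)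
    (hΨ' : Continuous Ψ') (S : A) (a b : ℝ) :
    Ψ b - exp ((b - a) • S) * Ψ a = ∫ t in a..b, exp ((b - t) • S) * (Ψ' t - S * Ψ t) := by
  have hE (t : ℝ) : HasDerivAt (fun u : ℝ => exp ((b - u) • S)) (-(exp ((b - t) • S) * S)) t :=
    ((hasDerivAt_exp_smul_const S (b - t)).scomp t
      ((hasDerivAt_id t).const_sub b)).congr_deriv (neg_one_smul ℝ _)
  have hderiv (t : ℝ) : HasDerivAt (fun u => exp ((b - u) • S) * Ψ u)
      (exp ((b - t) • S) * (Ψ' t - S * Ψ t)) t := by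
    refine ((hE t).mul (hΨ t)).congr_deriv ?_
    rw [mul_sub, neg_mul, ← mul_assoc]
    abel
  have hcont : Continuous fun t => exp ((b - t) • S) * (Ψ' t - S * Ψ t) := by
    have hΨc : Continuous Ψ := continuous_iff_continuousAt.mpr fun t => (hΨ t).continuousAt
    exact ((contDiff_exp_smul_const S (n := 0)).continuous.comp
      (continuous_const.sub continuous_id)).mul (hΨ'.sub (continuous_const.mul hΨc))
  rw [intervalIntegral.integral_eq_sub_of_hasDerivAt (fun t _ => hderiv t)
    (hcont.intervalIntegrable a b)]
  simp

end Exp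

section CStarRing

variable {A : Type*} [NormedRing A] [StarRing A] [CStarRing A]

theorem norm_mul_sub_mul_eq_norm_mul_star_sub {E U : A} (hE : E ∈ unitary A)
    (hU : U ∈ unitary A) (X S : A) : ‖E * (X - S * U)‖ = ‖X * star U - S‖ := by
  have hX : X - S * U = (X * star U - S) * U := by
    rw [sub_mul, mul_assoc, Unitary.star_mul_self_of_mem hU, mul_one]
  rw [hX, CStarRing.norm_mem_unitary_mul _ hE, CStarRing.norm_mul_mem_unitary _ hU]

variable [NormedAlgebra ℝ A] [CompleteSpace A] [StarModule ℝ A]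

theorem exp_smul_mem_unitary {S : A} (hS : S ∈ skewAdjoint A) (t : ℝ) :
    exp (t • S) ∈ unitary A := by
  -- `exp` does not depend on the choice of `ℚ`-algebra structure.
  let : NormedAlgebra ℚ A := NormedAlgebra.restrictScalars ℚ ℝ A
  exact exp_mem_unitary_of_mem_skewAdjoint (skewAdjoint.smul_mem t hS)

theorem norm_sub_exp_smul_le_integral_norm_deriv_mul_star_sub {Ψ : ℝ → A} (hΨ : ContDiff ℝ 1 Ψ)
    (hU : ∀ t, Ψ t ∈ unitary A) (hΨ0 : Ψ 0 = 1) {S : A} (hS : S ∈ skewAdjoint A) {h : ℝ}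
    (hh : 0 ≤ h) :
    ‖Ψ h - exp (h • S)‖ ≤ ∫ t in (0 : ℝ)..h, ‖deriv Ψ t * star (Ψ t) - S‖ := by
  have hderiv : ∀ t, HasDerivAt Ψ (deriv Ψ t) t := fun t =>
    ((hΨ.differentiable one_ne_zero) t).hasDerivAt
  have hduhamel := sub_exp_smul_mul_eq_integral hderiv hΨ.continuous_deriv_one S 0 h
  rw [hΨ0, mul_one, sub_zero] at hduhamel
  calc ‖Ψ h - exp (h • S)‖
      ≤ ∫ t in (0 : ℝ)..h, ‖exp ((h - t) • S) * (deriv Ψ t - S * Ψ t)‖ := by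
        rw [hduhamel]; exact intervalIntegral.norm_integral_le_integral_norm hh
    _ = ∫ t in (0 : ℝ)..h, ‖deriv Ψ t * star (Ψ t) - S‖ := by
        simp only [norm_mul_sub_mul_eq_norm_mul_star_sub (exp_smul_mem_unitary hS _) (hU _)]

end CStarRing

/-- The local error of a product of exponentials is bounded by the
integral of the deviation of its logarithmic derivative from C₁ + ⋯ + C_r. -/
theorem local_error_le_integral_of_modified_field {n r : ℕ}
    (C : Fin r → Matrix (Fin n) (Fin n) ℂ)
    (hskew : ∀ j, (C j)ᴴ = -(C j)) (h : ℝ) (hh : 0 ≤ h) :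
    ‖(List.ofFn fun j => exp (h • C j)).reverse.prod - exp (h • ∑ j, C j)‖ ≤
      ∫ t in (0:ℝ)..h,
        ‖deriv (fun τ : ℝ => (List.ofFn fun j => exp (τ • C j)).reverse.prod) t *
            ((List.ofFn fun j => exp (t • C j)).reverse.prod)⁻¹ - ∑ j, C j‖ := by
  have hC : ∀ j, C j ∈ skewAdjoint (Matrix (Fin n) (Fin n) ℂ) := fun j =>
    skewAdjoint.mem_iff.mpr (hskew j)
  have hU : ∀ t : ℝ, (List.ofFn fun j => exp (t • C j)).reverse.prod ∈ unitary _ := fun t =>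
    list_prod_mem fun U hU => by
      obtain ⟨j, rfl⟩ := List.mem_ofFn.mp (List.mem_reverse.mp hU)
      exact exp_smul_mem_unitary (hC j) t
  have hΨ : ContDiff ℝ 1 fun τ : ℝ => (List.ofFn fun j => exp (τ • C j)).reverse.prod := by
    simp only [List.ofFn_eq_map, ← List.map_reverse]
    exact contDiff_list_prod _ fun j _ => contDiff_exp_smul_const (C j)
  have hinv : ∀ t : ℝ, ((List.ofFn fun j => exp (t • C j)).reverse.prod)⁻¹ =
      star (List.ofFn fun j => exp (t • C j)).reverse.prod := fun t =>
    Matrix.inv_eq_left_inv (Unitary.star_mul_self_of_mem (hU t))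
  simp only [hinv]
  exact norm_sub_exp_smul_le_integral_norm_deriv_mul_star_sub hΨ hU (by simp)
    (sum_mem fun j _ => hC j) hh
end

section
/- Let Θ(t) be a differentiable family of unitary matrices with Θ(0) = I and M(t) = Θ'(t)Θ(t)^{-1}. Then for all h ≥ 0, ‖Θ(h) − Θ(−h)‖ ≤ ∫_0^h ‖M(t) + M(−t)‖ dt. -/
open scoped Matrix Matrix.Norms.L2Operator

/-!
For a unitary path `U` put `G t = (U t)⋆ U (-t)`, so that `G 0 = 1` and
`U h - U (-h) = U h (G 0 - G h)`. Differentiating `U⋆ U = 1` gives `(U')⋆ = -U⋆ U' U⋆`, whence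
`G' t = -(U t)⋆ (M t + M (-t)) U (-t)` with `M = U' U⋆`. Multiplication by unitaries is isometric
in a C⋆-ring, so the fundamental theorem of calculus bounds `‖U h - U (-h)‖` by `∫₀ʰ ‖M t + M (-t)‖`.
-/

section UnitaryPath

variable {A : Type*} [NormedRing A] [StarRing A] [CStarRing A] [NormedAlgebra ℝ A]
  [StarModule ℝ A] {U : ℝ → A}

lemma star_deriv_eq_neg_of_mem_unitary (hU : ∀ t, U t ∈ unitary A) {t : ℝ}
    (hd : DifferentiableAt ℝ U t) :
    star (deriv U t) = -(star (U t) * deriv U t * star (U t)) := by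
  have hconst : (fun s => star (U s) * U s) = fun _ => (1 : A) :=
    funext fun s => Unitary.star_mul_self_of_mem (hU s)
  have hderiv := hd.hasDerivAt.star.fun_mul hd.hasDerivAt
  rw [hconst] at hderiv
  have hzero := (hasDerivAt_const t (1 : A)).unique hderiv
  calc star (deriv U t) = star (deriv U t) * U t * star (U t) := by
        rw [mul_assoc, Unitary.mul_star_self_of_mem (hU t), mul_one]
    _ = -(star (U t) * deriv U t * star (U t)) := by
        rw [eq_neg_of_add_eq_zero_left hzero.symm, neg_mul]

lemma hasDerivAt_star_mul_comp_neg (hU : ∀ t, U t ∈ unitary A) (hd : Differentiable ℝ U)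
    (t : ℝ) :
    HasDerivAt (fun s => star (U s) * U (-s))
      (-(star (U t) * (deriv U t * star (U t) + deriv U (-t) * star (U (-t))) * U (-t))) t := by
  have hneg : HasDerivAt (fun s => U (-s)) (-deriv U (-t)) t := by
    simpa [Function.comp_def] using (hd (-t)).hasDerivAt.scomp t (hasDerivAt_neg t)
  convert (hd t).hasDerivAt.star.fun_mul hneg using 1
  simp only [star_deriv_eq_neg_of_mem_unitary hU (hd t), mul_add, add_mul, mul_assoc,
    Unitary.star_mul_self_of_mem (hU (-t)), mul_one, mul_neg, neg_mul, neg_add]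

theorem norm_sub_apply_neg_le_integral_of_mem_unitary [CompleteSpace A]
    (hU : ∀ t, U t ∈ unitary A) (hC : ContDiff ℝ 1 U) (hU0 : U 0 = 1) {h : ℝ} (hh : 0 ≤ h) :
    ‖U h - U (-h)‖ ≤
      ∫ t in (0:ℝ)..h, ‖deriv U t * star (U t) + deriv U (-t) * star (U (-t))‖ := by
  set G : ℝ → A := fun s => star (U s) * U (-s)
  set G' : ℝ → A := fun t =>
    -(star (U t) * (deriv U t * star (U t) + deriv U (-t) * star (U (-t))) * U (-t))
  have hd : Differentiable ℝ U := hC.differentiable one_ne_zero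
  have hG' : Continuous G' := by
    have hU'c : Continuous (deriv U) := hC.continuous_deriv le_rfl
    have hUc : Continuous U := hC.continuous
    fun_prop
  have ftc : ∫ t in (0:ℝ)..h, G' t = G h - G 0 :=
    intervalIntegral.integral_eq_sub_of_hasDerivAt
      (fun t _ => hasDerivAt_star_mul_comp_neg hU hd t) (hG'.intervalIntegrable 0 h)
  have hG0 : G 0 = 1 := by simp [G, hU0]
  calc ‖U h - U (-h)‖ = ‖G h - G 0‖ := by
        rw [hG0, ← CStarRing.norm_mem_unitary_mul _ (Unitary.star_mem (hU h)), norm_sub_rev,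
          mul_sub, Unitary.star_mul_self_of_mem (hU h)]
    _ ≤ ∫ t in (0:ℝ)..h, ‖G' t‖ := ftc ▸ intervalIntegral.norm_integral_le_integral_norm hh
    _ = _ := by
        simp only [G', norm_neg, CStarRing.norm_mul_mem_unitary _ (hU _),
          CStarRing.norm_mem_unitary_mul _ (Unitary.star_mem (hU _))]

end UnitaryPath

/-- For a differentiable family of unitary matrices Θ with Θ(0)=I and
logarithmic derivative M(t)=Θ'(t)Θ(t)⁻¹, one has
‖Θ(h) − Θ(−h)‖ ≤ ∫₀ʰ ‖M(t) + M(−t)‖ dt. -/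
theorem unitary_family_symmetric_difference_bound {n : ℕ}
    (Θ : ℝ → Matrix (Fin n) (Fin n) ℂ)
    (hΘ : ContDiff ℝ 1 Θ)
    (hU : ∀ t : ℝ, (Θ t)ᴴ * Θ t = 1)
    (hΘ0 : Θ 0 = 1) (h : ℝ) (hh : 0 ≤ h) :
    ‖Θ h - Θ (-h)‖ ≤
      ∫ t in (0:ℝ)..h,
        ‖deriv Θ t * (Θ t)⁻¹ + deriv Θ (-t) * (Θ (-t))⁻¹‖ := by
  have hunitary (t : ℝ) : Θ t ∈ unitary (Matrix (Fin n) (Fin n) ℂ) :=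
    Matrix.mem_unitaryGroup_iff'.mpr (hU t)
  have hinv (t : ℝ) : (Θ t)⁻¹ = star (Θ t) := Matrix.inv_eq_left_inv (hU t)
  simpa only [hinv] using norm_sub_apply_neg_le_integral_of_mem_unitary hunitary hΘ hΘ0 hh
end

section
/- Let A and B be skew-adjoint matrices and define the modified vector field M(t) of Θ(t) = e^{(t/2)b_sB} e^{ta_sA}···e^{tb_1B} e^{ta_1A} e^{−(t/2)(A+B)} by M(t) = Θ'(t)Θ(t)^{-1}. If the time-symmetric splitting Ψ(h) = e^{ha_1A}e^{hb_1B}···e^{ha_sA}e^{hb_sB}e^{ha_sA}···e^{hb_1B}e^{ha_1A} is of order 2p, then ‖Ψ(h) − e^{h(A+B)}‖ ≤ ∫_0^h ‖M(t) + M(−t)‖ dt for all h ≥ 0. -/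
open scoped Matrix Matrix.Norms.L2Operator
open NormedSpace

/-!
Exponentials of skew-adjoint elements are unitary, so `Φ*(h) = Φ(-h)⁻¹ = Φ(-h)*` and
`Ψ(h) = Φ(-h)* Φ(h)`. With the unitary `E = e^{(h/2)(A+B)}` this gives
`Ψ(h) - e^{h(A+B)} = E (Θ(-h)* Θ(h) - 1) E`. The path `D(t) = Θ(-t)* Θ(t)` starts at `1`, and
differentiating `Θ* Θ = 1` shows `D'(t) = Θ(-t)* (M(t) + M(-t)) Θ(t)` with `M = Θ' Θ*`, so the
fundamental theorem of calculus and the unitary invariance of the norm give the bound.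
-/

section SkewAdjointExp

variable {𝔸 : Type*} [NormedRing 𝔸] [NormedAlgebra ℝ 𝔸]

theorem exp_smul_mul_exp_smul [CompleteSpace 𝔸] (S : 𝔸) (c d : ℝ) :
    exp (c • S) * exp (d • S) = exp ((c + d) • S) := by
  -- the library lemmas about `exp` are stated for `ℚ`-algebras
  let _ : NormedAlgebra ℚ 𝔸 := .restrictScalars ℚ ℝ 𝔸
  rw [add_smul, exp_add_of_commute (((Commute.refl S).smul_left c).smul_right d)]

@[fun_prop]
theorem contDiff_normedSpace_exp [CompleteSpace 𝔸] {n : WithTop ℕ∞} :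
    ContDiff ℝ n (exp : 𝔸 → 𝔸) :=
  contDiff_iff_contDiffAt.2 fun x => (exp_analytic (𝕂 := ℝ) x).contDiffAt

variable [StarRing 𝔸] [ContinuousStar 𝔸] [StarModule ℝ 𝔸] {S : 𝔸}

theorem star_exp_smul_of_mem_skewAdjoint (hS : S ∈ skewAdjoint 𝔸) (c : ℝ) :
    star (exp (c • S)) = exp ((-c) • S) := by
  rw [star_exp, star_smul, star_trivial, skewAdjoint.mem_iff.mp hS, smul_neg, neg_smul]

theorem exp_smul_mem_unitary_of_mem_skewAdjoint [CompleteSpace 𝔸] (hS : S ∈ skewAdjoint 𝔸)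
    (c : ℝ) :
    exp (c • S) ∈ unitary 𝔸 := by
  let _ : NormedAlgebra ℚ 𝔸 := .restrictScalars ℚ ℝ 𝔸
  exact exp_mem_unitary_of_mem_skewAdjoint (skewAdjoint.smul_mem c hS)

end SkewAdjointExp

theorem star_list_prod {R : Type*} [Monoid R] [StarMul R] (l : List R) :
    star l.prod = (l.map star).reverse.prod := by
  induction l with
  | nil => simp
  | cons a l ih => simp [star_mul, ih, List.prod_append]

theorem ContDiff.list_prod_map {𝕜 E 𝔸 ι : Type*} [NontriviallyNormedField 𝕜]
    [NormedAddCommGroup E] [NormedSpace 𝕜 E] [NormedRing 𝔸] [NormedAlgebra 𝕜 𝔸]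
    {n : WithTop ℕ∞} {l : List ι} {f : ι → E → 𝔸} (h : ∀ i ∈ l, ContDiff 𝕜 n (f i)) :
    ContDiff 𝕜 n fun x => (l.map (f · x)).prod := by
  induction l with
  | nil => exact contDiff_const
  | cons i l ih =>
    simp only [List.map_cons, List.prod_cons]
    exact (h i List.mem_cons_self).mul (ih fun j hj => h j (List.mem_cons_of_mem i hj))

section UnitaryPath

variable {𝔸 : Type*} [NormedRing 𝔸] [NormedAlgebra ℝ 𝔸] [StarRing 𝔸] [CStarRing 𝔸]
  [StarModule ℝ 𝔸] {U U' : ℝ → 𝔸}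

theorem star_mul_add_star_mul_eq_zero_of_mem_unitary {u : 𝔸} {t : ℝ} (hU : HasDerivAt U u t)
    (hunit : ∀ s, U s ∈ unitary 𝔸) : star u * U t + star (U t) * u = 0 := by
  have hconst : (fun s => star (U s) * U s) = fun _ => 1 :=
    funext fun s => Unitary.star_mul_self_of_mem (hunit s)
  have hderiv : HasDerivAt (fun s => star (U s) * U s) _ t := hU.star.mul hU
  rw [hconst] at hderiv
  exact hderiv.unique (hasDerivAt_const t 1)

theorem hasDerivAt_star_comp_neg_mul (hU : ∀ s, HasDerivAt U (U' s) s)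
    (hunit : ∀ s, U s ∈ unitary 𝔸) (t : ℝ) :
    HasDerivAt (fun s => star (U (-s)) * U s)
      (star (U (-t)) * ((U' t * star (U t) + U' (-t) * star (U (-t))) * U t)) t := by
  have hneg : HasDerivAt (fun s => U (-s)) (-U' (-t)) t := by
    simpa [Function.comp_def] using (hU (-t)).scomp t (hasDerivAt_neg t)
  refine (hneg.star.mul (hU t)).congr_deriv ?_
  have hskew := star_mul_add_star_mul_eq_zero_of_mem_unitary (hU (-t)) hunit
  have hstar : star (U' (-t)) = -(star (U (-t)) * U' (-t) * star (U (-t))) := by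
    rw [eq_neg_iff_add_eq_zero]
    calc star (U' (-t)) + star (U (-t)) * U' (-t) * star (U (-t))
        = (star (U' (-t)) * U (-t) + star (U (-t)) * U' (-t)) * star (U (-t)) := by
          rw [add_mul, mul_assoc (star _) (U (-t)), Unitary.mul_star_self_of_mem (hunit (-t)),
            mul_one]
      _ = 0 := by rw [hskew, zero_mul]
  rw [star_neg, hstar, neg_neg]
  calc _ = star (U (-t)) * U' t * (star (U t) * U t) +
        star (U (-t)) * U' (-t) * star (U (-t)) * U t := by
        rw [Unitary.star_mul_self_of_mem (hunit t), mul_one, add_comm]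
    _ = _ := by noncomm_ring

theorem norm_star_comp_neg_mul_sub_one_le [CompleteSpace 𝔸] (hU : ContDiff ℝ 1 U)
    (hunit : ∀ t, U t ∈ unitary 𝔸) {h : ℝ} (hh : 0 ≤ h) :
    ‖star (U (-h)) * U h - 1‖ ≤
      ∫ t in (0 : ℝ)..h, ‖deriv U t * star (U t) + deriv U (-t) * star (U (-t))‖ := by
  have hderiv : ∀ t, HasDerivAt U (deriv U t) t := fun t =>
    ((hU.differentiable one_ne_zero) t).hasDerivAt
  have hcont : Continuous (deriv U) := hU.continuous_deriv le_rfl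
  have hcontU := hU.continuous
  have hFTC := intervalIntegral.integral_eq_sub_of_hasDerivAt
    (fun t _ => hasDerivAt_star_comp_neg_mul hderiv hunit t)
    ((by fun_prop : Continuous fun t => star (U (-t)) *
      ((deriv U t * star (U t) + deriv U (-t) * star (U (-t))) * U t)).intervalIntegrable 0 h)
  calc ‖star (U (-h)) * U h - 1‖ = ‖∫ t in (0 : ℝ)..h, star (U (-t)) *
        ((deriv U t * star (U t) + deriv U (-t) * star (U (-t))) * U t)‖ := by
        rw [hFTC, neg_zero, Unitary.star_mul_self_of_mem (hunit 0)]
    _ ≤ ∫ t in (0 : ℝ)..h, ‖star (U (-t)) *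
        ((deriv U t * star (U t) + deriv U (-t) * star (U (-t))) * U t)‖ :=
      intervalIntegral.norm_integral_le_integral_norm hh
    _ = _ := intervalIntegral.integral_congr fun t _ => by
      rw [CStarRing.norm_mem_unitary_mul _ (Unitary.star_mem (hunit (-t))),
        CStarRing.norm_mul_mem_unitary _ (hunit t)]

end UnitaryPath

section Splitting

variable {𝔸 : Type*} [NormedRing 𝔸] [NormedAlgebra ℝ 𝔸]

/-- The paper's `Φ`; `symmetricSplitting` below is its `Ψ`. -/
noncomputable def splittingHalf (A B : 𝔸) (a b : ℕ → ℝ) (s : ℕ) (t : ℝ) : 𝔸 :=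
  exp ((t / 2 * b s) • B) * exp ((t * a s) • A) *
    (List.ofFn fun j : Fin (s - 1) =>
      exp ((t * b ((j : ℕ) + 1)) • B) * exp ((t * a ((j : ℕ) + 1)) • A)).reverse.prod

noncomputable def symmetricSplitting (A B : 𝔸) (a b : ℕ → ℝ) (s : ℕ) (h : ℝ) : 𝔸 :=
  (List.ofFn fun j : Fin (s - 1) =>
      exp ((h * a ((j : ℕ) + 1)) • A) * exp ((h * b ((j : ℕ) + 1)) • B)).prod *
    (exp ((h * a s) • A) * exp ((h * b s) • B) * exp ((h * a s) • A)) *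
    (List.ofFn fun j : Fin (s - 1) =>
      exp ((h * b ((j : ℕ) + 1)) • B) * exp ((h * a ((j : ℕ) + 1)) • A)).reverse.prod

variable [CompleteSpace 𝔸] (A B : 𝔸) (a b : ℕ → ℝ) (s : ℕ)

theorem contDiff_splittingHalf {n : WithTop ℕ∞} : ContDiff ℝ n (splittingHalf A B a b s) := by
  unfold splittingHalf
  refine ContDiff.mul (by fun_prop) ?_
  simp only [List.ofFn_eq_map, ← List.map_reverse]
  exact ContDiff.list_prod_map (f := fun (j : Fin (s - 1)) (t : ℝ) =>
    exp ((t * b ((j : ℕ) + 1)) • B) * exp ((t * a ((j : ℕ) + 1)) • A)) fun _ _ => by fun_prop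

variable [StarRing 𝔸] [ContinuousStar 𝔸] [StarModule ℝ 𝔸] {A B}

theorem splittingHalf_mem_unitary (hA : A ∈ skewAdjoint 𝔸) (hB : B ∈ skewAdjoint 𝔸) (t : ℝ) :
    splittingHalf A B a b s t ∈ unitary 𝔸 := by
  refine mul_mem (mul_mem (exp_smul_mem_unitary_of_mem_skewAdjoint hB _)
    (exp_smul_mem_unitary_of_mem_skewAdjoint hA _)) (list_prod_mem ?_)
  simp only [List.mem_reverse, List.mem_ofFn]
  rintro _ ⟨j, rfl⟩
  exact mul_mem (exp_smul_mem_unitary_of_mem_skewAdjoint hB _)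
    (exp_smul_mem_unitary_of_mem_skewAdjoint hA _)

theorem symmetricSplitting_eq_star_mul (hA : A ∈ skewAdjoint 𝔸) (hB : B ∈ skewAdjoint 𝔸)
    (h : ℝ) :
    symmetricSplitting A B a b s h =
      star (splittingHalf A B a b s (-h)) * splittingHalf A B a b s h := by
  unfold symmetricSplitting splittingHalf
  simp only [star_mul, star_list_prod, List.map_reverse, List.reverse_reverse, List.map_ofFn,
    Function.comp_def, star_exp_smul_of_mem_skewAdjoint hA, star_exp_smul_of_mem_skewAdjoint hB,
    neg_div, neg_mul, neg_neg]
  rw [show h * b s = h / 2 * b s + h / 2 * b s by ring, ← exp_smul_mul_exp_smul]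
  simp only [mul_assoc]

end Splitting

section ModifiedVectorField

variable {𝔸 : Type*} [NormedRing 𝔸] [NormedAlgebra ℝ 𝔸] [CompleteSpace 𝔸] [StarRing 𝔸]
  [CStarRing 𝔸] [StarModule ℝ 𝔸] {Φ Θ : ℝ → 𝔸} {C : 𝔸}

theorem norm_star_mul_sub_exp_le (hΦ : ContDiff ℝ 1 Φ) (hunit : ∀ t, Φ t ∈ unitary 𝔸)
    (hC : C ∈ skewAdjoint 𝔸) (hΘ : ∀ t, Θ t = Φ t * exp ((-(t / 2)) • C)) {h : ℝ} (hh : 0 ≤ h) :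
    ‖star (Φ (-h)) * Φ h - exp (h • C)‖ ≤
      ∫ t in (0 : ℝ)..h, ‖deriv Θ t * star (Θ t) + deriv Θ (-t) * star (Θ (-t))‖ := by
  have hΘd : ContDiff ℝ 1 Θ := by
    rw [funext hΘ]
    exact hΦ.mul (by fun_prop)
  have hΘu : ∀ t, Θ t ∈ unitary 𝔸 := fun t => by
    rw [hΘ t]
    exact mul_mem (hunit t) (exp_smul_mem_unitary_of_mem_skewAdjoint hC _)
  set E := exp ((h / 2) • C)
  have hE : E ∈ unitary 𝔸 := exp_smul_mem_unitary_of_mem_skewAdjoint hC _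
  have hEE : E * E = exp (h • C) := by rw [exp_smul_mul_exp_smul, add_halves]
  have hEinv : E * exp ((-(h / 2)) • C) = 1 ∧ exp ((-(h / 2)) • C) * E = 1 := by
    simp only [E, exp_smul_mul_exp_smul, add_neg_cancel, neg_add_cancel, zero_smul, exp_zero,
      and_self]
  have hconj : star (Φ (-h)) * Φ h - exp (h • C) = E * (star (Θ (-h)) * Θ h - 1) * E := by
    rw [hΘ, hΘ, star_mul, star_exp_smul_of_mem_skewAdjoint hC, neg_div, neg_neg, ← hEE]
    calc _ = E * exp ((-(h / 2)) • C) * (star (Φ (-h)) * Φ h) * (exp ((-(h / 2)) • C) * E) -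
        E * E := by rw [hEinv.1, hEinv.2, one_mul, mul_one]
      _ = _ := by noncomm_ring
  rw [hconj, CStarRing.norm_mul_mem_unitary _ hE, CStarRing.norm_mem_unitary_mul _ hE]
  exact norm_star_comp_neg_mul_sub_one_le hΘd hΘu hh

end ModifiedVectorField

theorem two_operator_symmetric_splitting_error_bound_general {n s : ℕ}
    (A B : Matrix (Fin n) (Fin n) ℂ) (hA : Aᴴ = -A) (hB : Bᴴ = -B)
    (a b : ℕ → ℝ)
    (Φ Θ Ψ : ℝ → Matrix (Fin n) (Fin n) ℂ)
    (hΦ : ∀ t : ℝ, Φ t =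
      exp ((t / 2 * b s) • B) * exp ((t * a s) • A) *
        (List.ofFn fun j : Fin (s - 1) =>
          exp ((t * b ((j : ℕ) + 1)) • B) * exp ((t * a ((j : ℕ) + 1)) • A)).reverse.prod)
    (hΘ : ∀ t : ℝ, Θ t = Φ t * exp ((-(t / 2)) • (A + B)))
    (hΨ : ∀ h : ℝ, Ψ h =
      (List.ofFn fun j : Fin (s - 1) =>
          exp ((h * a ((j : ℕ) + 1)) • A) * exp ((h * b ((j : ℕ) + 1)) • B)).prod *
        (exp ((h * a s) • A) * exp ((h * b s) • B) * exp ((h * a s) • A)) *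
        (List.ofFn fun j : Fin (s - 1) =>
          exp ((h * b ((j : ℕ) + 1)) • B) * exp ((h * a ((j : ℕ) + 1)) • A)).reverse.prod) :
    ∀ h : ℝ, 0 ≤ h →
      ‖Ψ h - exp (h • (A + B))‖ ≤
        ∫ t in (0:ℝ)..h,
          ‖deriv Θ t * (Θ t)⁻¹ + deriv Θ (-t) * (Θ (-t))⁻¹‖ := by
  intro h hh
  have hA' : A ∈ skewAdjoint _ := skewAdjoint.mem_iff.2 hA
  have hB' : B ∈ skewAdjoint _ := skewAdjoint.mem_iff.2 hB
  have hΦ' : Φ = splittingHalf A B a b s := funext hΦ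
  have hΘu : ∀ t, Θ t ∈ unitary _ := fun t => by
    rw [hΘ t, hΦ']
    exact mul_mem (splittingHalf_mem_unitary a b s hA' hB' t)
      (exp_smul_mem_unitary_of_mem_skewAdjoint (add_mem hA' hB') _)
  have hΨh : Ψ h = star (Φ (-h)) * Φ h := by
    rw [hΨ h, hΦ', ← symmetricSplitting_eq_star_mul a b s hA' hB' h, symmetricSplitting]
  have hinv : ∀ t, (Θ t)⁻¹ = star (Θ t) := fun t =>
    Matrix.inv_eq_left_inv (Unitary.star_mul_self_of_mem (hΘu t))
  simp only [hΨh, hinv]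
  exact norm_star_mul_sub_exp_le (hΦ' ▸ contDiff_splittingHalf A B a b s)
    (hΦ' ▸ splittingHalf_mem_unitary a b s hA' hB') (add_mem hA' hB') hΘ hh

/-- Local error bound for a time-symmetric splitting method with two
skew-adjoint operators, in terms of the modified vector field M(t) of
Θ(t) = Φ(t)e^{−(t/2)(A+B)}. -/
theorem two_operator_symmetric_splitting_error_bound {n s p : ℕ} (hs : 1 ≤ s)
    (A B : Matrix (Fin n) (Fin n) ℂ) (hA : Aᴴ = -A) (hB : Bᴴ = -B)
    (a b : ℕ → ℝ)
    (Φ Θ Ψ : ℝ → Matrix (Fin n) (Fin n) ℂ)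
    (hΦ : ∀ t : ℝ, Φ t =
      exp ((t / 2 * b s) • B) * exp ((t * a s) • A) *
        (List.ofFn fun j : Fin (s - 1) =>
          exp ((t * b ((j : ℕ) + 1)) • B) * exp ((t * a ((j : ℕ) + 1)) • A)).reverse.prod)
    (hΘ : ∀ t : ℝ, Θ t = Φ t * exp ((-(t / 2)) • (A + B)))
    (hΨ : ∀ h : ℝ, Ψ h =
      (List.ofFn fun j : Fin (s - 1) =>
          exp ((h * a ((j : ℕ) + 1)) • A) * exp ((h * b ((j : ℕ) + 1)) • B)).prod *
        (exp ((h * a s) • A) * exp ((h * b s) • B) * exp ((h * a s) • A)) *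
        (List.ofFn fun j : Fin (s - 1) =>
          exp ((h * b ((j : ℕ) + 1)) • B) * exp ((h * a ((j : ℕ) + 1)) • A)).reverse.prod)
    (horder : ∀ k ≤ 2 * p,
      iteratedDeriv k (fun h : ℝ => Ψ h - exp (h • (A + B))) 0 = 0) :
    ∀ h : ℝ, 0 ≤ h →
      ‖Ψ h - exp (h • (A + B))‖ ≤
        ∫ t in (0:ℝ)..h,
          ‖deriv Θ t * (Θ t)⁻¹ + deriv Θ (-t) * (Θ (-t))⁻¹‖ :=
  two_operator_symmetric_splitting_error_bound_general A B hA hB a b Φ Θ Ψ hΦ hΘ hΨ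
end
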